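/- If P is a set of 6 points in convex position (no three collinear) in the plane, then the disjointness graph D(P) is not Hamiltonian. -/

import Mathlib

noncomputable section

/-- Points of the plane. -/
abbrev Pl := ℝ × ℝ

/-- `P` is in general position: no three (distinct) points of `P` are collinear. -/
def GenPos (P : Set Pl) : Prop :=
  ∀ a ∈ P, ∀ b ∈ P, ∀ c ∈ P, a ≠ b → a ≠ c → b ≠ c →
    ¬ Collinear ℝ ({a, b, c} : Set Pl)

/-- The set of all closed straight-line segments with (distinct) endpoints in `P`. -/
def Segs (P : Set Pl) : Set (Set Pl) :=
  {s | ∃ a ∈ P, ∃ b ∈ P, a ≠ b ∧ s = segment ℝ a b}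

/-- The edge disjointness graph of `P`: vertices are the segments of `P`,
two of them adjacent iff they are disjoint. -/
def DisjGraph (P : Set Pl) : SimpleGraph ↥(Segs P) where
  Adj s t := Disjoint (s : Set Pl) (t : Set Pl)
  symm := ⟨fun _ _ h => Disjoint.symm h⟩
  loopless := ⟨by
    rintro ⟨s, a, ha, b, hb, hab, rfl⟩ h
    exact (Set.not_disjoint_iff.2
      ⟨a, left_mem_segment ℝ a b, left_mem_segment ℝ a b⟩) h⟩

/-- An independent set of vertices: pairwise non-adjacent. -/
def IsIndepSet {V : Type*} (G : SimpleGraph V) (s : Set V) : Prop :=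
  s.Pairwise fun a b => ¬ G.Adj a b

/-- Twice the signed area of the triangle `a b c`; its sign is the orientation. -/
def det3 (a b c : Pl) : ℝ :=
  (b.1 - a.1) * (c.2 - a.2) - (b.2 - a.2) * (c.1 - a.1)

/-- `p 0, …, p (n-1)` are in convex position, appearing in this
(counterclockwise) cyclic order on their convex hull. -/
def ConvexCyclic {n : ℕ} (p : Fin n → Pl) : Prop :=
  ∀ i j k : Fin n, i < j → j < k → 0 < det3 (p i) (p j) (p k)

/-- `P` is in convex position: every point of `P` is a vertex of the convex hull. -/
def ConvexPos (P : Set Pl) : Prop :=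
  ∀ x ∈ P, x ∉ convexHull ℝ (P \ {x})

/-- `P` and `Q` have the same order type. -/
def SameOrderType (P Q : Set Pl) : Prop :=
  ∃ γ : Pl → Pl, Set.BijOn γ P Q ∧
    ∀ a ∈ P, ∀ b ∈ P, ∀ c ∈ P,
      Real.sign (det3 a b c) = Real.sign (det3 (γ a) (γ b) (γ c))

/-- A thrackle of `P`: a set of segments of `P`, any two of which intersect. -/
def IsThrackle (P : Set Pl) (T : Set (Set Pl)) : Prop :=
  T ⊆ Segs P ∧ ∀ s ∈ T, ∀ t ∈ T, s ≠ t → ¬ Disjoint s t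

end

/-!
Label the points `p 0, …, p 5` counterclockwise, by sorting them by angle around the
lexicographically smallest one. Two segments `p i p j`, `p k p l` then meet whenever they share
an endpoint or their index pairs interleave, so disjoint segments have separated or nested
index pairs, and a Hamiltonian cycle of `D(P)` is also one of the graph on the 15 chords of a
hexagon in which separated or nested chords are adjacent.

In that graph a long diagonal sees only the two sides parallel to it, and a short diagonal
sees only two sides and the opposite short diagonal. In a spanning 2-regular subgraph the long
diagonals take up one slot at every side, so each side meets at most one short diagonal, while
each short diagonal meets at least one side, and two unless it uses its opposite. Counting
side–short-diagonal edges both ways forces every short diagonal onto its opposite and matches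
sides with short diagonals. Once short diagonal `0` has chosen its side this matching
propagates around the hexagon and closes up a 5-cycle, which a Hamiltonian cycle cannot
contain.
-/

namespace SimpleGraph

variable {V W : Type*} {G : SimpleGraph V}

lemma IsHamiltonian.map [Fintype V] [DecidableEq V] [Fintype W] [DecidableEq W]
    {G' : SimpleGraph W} (f : G →g G') (hf : Function.Bijective f) (hG : G.IsHamiltonian) :
    G'.IsHamiltonian := fun hW =>
  let ⟨a, p, hp⟩ := hG (by rwa [Fintype.card_of_bijective hf])
  ⟨f a, p.map f, hp.map hf⟩

namespace Subgraph

variable {H : G.Subgraph} {v a b : V}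

lemma eq_or_eq_of_ncard_neighborSet_eq_two (hv : (H.neighborSet v).ncard = 2)
    (ha : H.Adj v a) (hb : H.Adj v b) (hab : a ≠ b) {y : V} (hy : H.Adj v y) : y = a ∨ y = b := by
  have : {a, b} = H.neighborSet v :=
    Set.eq_of_subset_of_ncard_le (Set.insert_subset_iff.2 ⟨ha, Set.singleton_subset_iff.2 hb⟩)
      (by rw [hv, Set.ncard_pair hab]) (Set.finite_of_ncard_ne_zero (by omega))
  have hy' : y ∈ ({a, b} : Set V) := this ▸ hy
  simpa using hy'

lemma adj_and_adj_of_ncard_neighborSet_eq_two (hv : (H.neighborSet v).ncard = 2) (hab : a ≠ b)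
    (h : ∀ y, H.Adj v y → y = a ∨ y = b) : H.Adj v a ∧ H.Adj v b := by
  have : H.neighborSet v = {a, b} :=
    Set.eq_of_subset_of_ncard_le (fun y hy => h y hy) (by rw [hv, Set.ncard_pair hab])
  simp only [← H.mem_neighborSet, this]
  exact ⟨Set.mem_insert a {b}, Set.mem_insert_of_mem a rfl⟩

lemma exists_adj_ne_of_ncard_neighborSet_eq_two (hv : (H.neighborSet v).ncard = 2) (a : V) :
    ∃ b, b ≠ a ∧ H.Adj v b := by
  by_contra! h
  have := Set.ncard_le_ncard (s := H.neighborSet v)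
    (fun b hb => Set.mem_singleton_iff.2 (by_contra fun hne => h b hne hb))
    (Set.finite_singleton a)
  rw [hv, Set.ncard_singleton] at this
  omega

end Subgraph

namespace Walk

variable [DecidableEq V] {a : V} {p : G.Walk a a}

lemma IsHamiltonianCycle.eq_univ_of_adj_closed (hp : p.IsHamiltonianCycle) {S : Set V} {x : V}
    (hx : x ∈ S) (hS : ∀ u w, p.toSubgraph.Adj u w → u ∈ S → w ∈ S) : S = Set.univ := by
  refine Set.eq_univ_of_forall fun y => by_contra fun hy => ?_
  set c := p.rotate x (hp.mem_support x)
  obtain ⟨d, hd, hdS, hdS'⟩ :=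
    (c.takeUntil y ((hp.rotate (hp.mem_support x)).mem_support y)).exists_boundary_dart S hx hy
  refine hdS' (hS _ _ ?_ hdS)
  rw [← p.toSubgraph_rotate (hp.mem_support x), adj_toSubgraph_iff_mem_edges]
  exact List.mem_map_of_mem (c.darts_takeUntil_subset_darts _ hd)

lemma IsHamiltonianCycle.surjective_of_cycle (hp : p.IsHamiltonianCycle) {m : ℕ}
    (v : Fin (m + 3) → V) (hv : Function.Injective v)
    (hadj : ∀ k, p.toSubgraph.Adj (v k) (v (k + 1))) : Function.Surjective v := by
  refine Set.range_eq_univ.1 (hp.eq_univ_of_adj_closed (Set.mem_range_self 0) ?_)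
  rintro _ w hw ⟨k, rfl⟩
  have hprev : p.toSubgraph.Adj (v k) (v (k - 1)) := by simpa using (hadj (k - 1)).symm
  have hne : k + 1 ≠ k - 1 := by
    intro h
    have h2 : (1 + 1 : Fin (m + 3)) = 0 := by
      rw [← sub_self (k - 1)]; nth_rewrite 1 [← h]; abel
    simp only [Fin.ext_iff, Fin.val_add, Fin.coe_ofNat_eq_mod, Nat.one_mod, Nat.zero_mod] at h2
    rw [Nat.mod_eq_of_lt (by omega)] at h2
    omega
  rcases Subgraph.eq_or_eq_of_ncard_neighborSet_eq_two
    (hp.isCycle.ncard_neighborSet_toSubgraph_eq_two (hp.mem_support _)) (hadj k) hprev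
    (hv.ne hne) hw with rfl | rfl <;> exact Set.mem_range_self _

end Walk

end SimpleGraph

lemma exists_equiv_fin_of_isStrictTotalOrder {α : Type*} [Fintype α] (r : α → α → Prop)
    [IsStrictTotalOrder α r] {k : ℕ} (hk : Fintype.card α = k) :
    ∃ e : Fin k ≃ α, ∀ i j, i < j → r (e i) (e j) := by
  classical
  let := linearOrderOfSTO r
  exact ⟨(Fintype.orderIsoFinOfCardEq α hk).toEquiv,
    fun _ _ h => (Fintype.orderIsoFinOfCardEq α hk).strictMono h⟩

lemma det3_swap (a b c : Pl) : det3 a c b = -det3 a b c := by unfold det3; ring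

lemma det3_self_left (a b : Pl) : det3 a a b = 0 := by unfold det3; ring

lemma det3_self_right (a b : Pl) : det3 a b b = 0 := by unfold det3; ring

lemma collinear_of_det3_eq_zero {a b c : Pl} (h : det3 a b c = 0) :
    Collinear ℝ ({a, b, c} : Set Pl) := by
  rcases eq_or_ne a b with rfl | hab
  · simpa using collinear_pair ℝ a c
  have hn : (b.1 - a.1) ^ 2 + (b.2 - a.2) ^ 2 ≠ 0 := by
    intro h0
    exact hab (Prod.ext (by nlinarith [sq_nonneg (b.1 - a.1), sq_nonneg (b.2 - a.2)])
      (by nlinarith [sq_nonneg (b.1 - a.1), sq_nonneg (b.2 - a.2)]))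
  -- `c` is its own orthogonal projection onto the line `ab`
  have hc : AffineMap.lineMap a b
      (((c.1 - a.1) * (b.1 - a.1) + (c.2 - a.2) * (b.2 - a.2)) /
        ((b.1 - a.1) ^ 2 + (b.2 - a.2) ^ 2)) = c := by
    unfold det3 at h
    ext <;> simp only [AffineMap.lineMap_apply, vsub_eq_sub, vadd_eq_add, Prod.fst_add,
      Prod.snd_add, Prod.smul_fst, Prod.smul_snd, Prod.fst_sub, Prod.snd_sub, smul_eq_mul] <;>
      field_simp
    · linear_combination (b.2 - a.2) * h
    · linear_combination (a.1 - b.1) * h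
  have := collinear_insert_of_mem_affineSpan_pair (hc ▸ AffineMap.lineMap_mem_affineSpan_pair _ a b)
  rwa [show ({a, b, c} : Set Pl) = {c, a, b} by
    ext; simp only [Set.mem_insert_iff, Set.mem_singleton_iff]; tauto]

lemma GenPos.det3_ne_zero {P : Set Pl} (hP : GenPos P) {a b c : Pl} (ha : a ∈ P) (hb : b ∈ P)
    (hc : c ∈ P) (hab : a ≠ b) (hac : a ≠ c) (hbc : b ≠ c) : det3 a b c ≠ 0 :=
  fun h => hP a ha b hb c hc hab hac hbc (collinear_of_det3_eq_zero h)

lemma GenPos.eq_or_eq_of_mem_segment {P : Set Pl} (hP : GenPos P) {a b c : Pl} (ha : a ∈ P)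
    (hb : b ∈ P) (hc : c ∈ P) (hab : a ≠ b) (h : c ∈ segment ℝ a b) : c = a ∨ c = b := by
  by_contra! hne
  exact hP a ha c hc b hb (Ne.symm hne.1) hab hne.2 (mem_segment_iff_wbtw.1 h).collinear

lemma det3_pos_trans {p a b c : Pl} (ha : toLex p < toLex a) (hb : toLex p < toLex b)
    (hc : toLex p < toLex c) (hab : 0 < det3 p a b) (hbc : 0 < det3 p b c) : 0 < det3 p a c := by
  simp only [Prod.Lex.toLex_lt_toLex] at ha hb hc
  have key : (b.1 - p.1) * det3 p a c = (a.1 - p.1) * det3 p b c + (c.1 - p.1) * det3 p a b := by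
    unfold det3; ring
  have hc₁ : 0 ≤ c.1 - p.1 := by rcases hc with hc | ⟨hc, _⟩ <;> linarith
  rcases hb with hb | ⟨hb, hb'⟩
  · rcases ha with ha | ⟨ha, ha'⟩
    · refine pos_of_mul_pos_right (key ▸ ?_) (sub_pos.2 hb).le
      nlinarith [mul_pos (sub_pos.2 ha) hbc, mul_nonneg hc₁ hab.le]
    · unfold det3 at hab
      rw [← ha, sub_self, zero_mul, zero_sub] at hab
      nlinarith [mul_pos (sub_pos.2 ha') (sub_pos.2 hb)]
  · unfold det3 at hbc
    rw [← hb, sub_self, zero_mul, zero_sub] at hbc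
    nlinarith [mul_nonneg (sub_pos.2 hb').le hc₁]

lemma mem_convexHull_of_det3 {p a b c : Pl} (h₁ : 0 < det3 p a b) (h₂ : 0 < det3 p b c)
    (h₃ : det3 a b c < 0) : b ∈ convexHull ℝ {p, a, c} := by
  have hD : det3 p a c = -det3 a b c + det3 p b c + det3 p a b := by unfold det3; ring
  have hpos : 0 < det3 p a c := by linarith
  -- barycentric coordinates of `b` in the triangle `p a c`
  have := (convex_convexHull ℝ ({p, a, c} : Set Pl)).sum_mem (t := Finset.univ)
    (w := ![-det3 a b c / det3 p a c, det3 p b c / det3 p a c, det3 p a b / det3 p a c])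
    (z := ![p, a, c]) ?_ ?_ ?_
  · convert this using 1
    simp only [Fin.sum_univ_three, Matrix.cons_val_zero, Matrix.cons_val_one, Matrix.cons_val_two,
      Matrix.tail_cons, Matrix.head_cons]
    ext <;> simp only [Prod.fst_add, Prod.snd_add, Prod.smul_fst, Prod.smul_snd, smul_eq_mul] <;>
      field_simp <;> unfold det3 <;> ring
  · intro i _
    fin_cases i
    exacts [div_nonneg (by linarith) hpos.le, div_nonneg h₂.le hpos.le, div_nonneg h₁.le hpos.le]
  · simp only [Fin.sum_univ_three, Matrix.cons_val_zero, Matrix.cons_val_one, Matrix.cons_val_two,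
      Matrix.tail_cons, Matrix.head_cons]
    field_simp
    linarith
  · intro i _; fin_cases i <;> exact subset_convexHull ℝ _ (by simp)

lemma not_disjoint_segment_of_det3_pos {a b c d : Pl} (h₁ : 0 < det3 a c b) (h₂ : 0 < det3 a c d)
    (h₃ : 0 < det3 a b d) (h₄ : 0 < det3 c b d) :
    ¬ Disjoint (segment ℝ a b) (segment ℝ c d) := by
  -- `T` is twice the area of the quadrilateral `a c b d`, cut along either diagonal; the
  -- weights of the crossing point are ratios of the areas of the four triangles
  have hT : det3 a c d + det3 c b d = det3 a c b + det3 a b d := by unfold det3; ring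
  set T := det3 a c d + det3 c b d
  have hTpos : 0 < T := by positivity
  refine Set.not_disjoint_iff.2 ⟨(det3 c b d / T) • a + (det3 a c d / T) • b,
    ⟨_, _, div_nonneg h₄.le hTpos.le, div_nonneg h₂.le hTpos.le, by field_simp; ring, rfl⟩,
    ⟨det3 a b d / T, det3 a c b / T, div_nonneg h₃.le hTpos.le, div_nonneg h₁.le hTpos.le,
      by rw [← add_div, div_eq_one_iff_eq hTpos.ne', hT, add_comm], ?_⟩⟩
  ext <;> simp only [Prod.fst_add, Prod.snd_add, Prod.smul_fst, Prod.smul_snd, smul_eq_mul] <;>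
    field_simp <;> unfold det3 <;> ring

lemma ConvexPos.det3_pos {P : Set Pl} (hP : ConvexPos P) {p a b c : Pl} (hp : p ∈ P) (ha : a ∈ P)
    (hb : b ∈ P) (hc : c ∈ P) (hne : det3 a b c ≠ 0) (h₁ : 0 < det3 p a b)
    (h₂ : 0 < det3 p b c) : 0 < det3 a b c := by
  refine hne.lt_or_gt.resolve_left fun h₃ => hP b hb ?_
  refine convexHull_mono ?_ (mem_convexHull_of_det3 h₁ h₂ h₃)
  have hpb : p ≠ b := by rintro rfl; rw [det3_self_left] at h₂; exact h₂.false
  have hab : a ≠ b := by rintro rfl; rw [det3_self_right] at h₁; exact h₁.false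
  have hcb : c ≠ b := by rintro rfl; rw [det3_self_right] at h₂; exact h₂.false
  simp [Set.insert_subset_iff, hp, ha, hc, hpb, hab, hcb]

lemma ConvexCyclic.cons {n : ℕ} {p₀ : Pl} {f : Fin n → Pl} (hf : ConvexCyclic f)
    (h₀ : ∀ i j, i < j → 0 < det3 p₀ (f i) (f j)) :
    ConvexCyclic (Fin.cons p₀ f : Fin (n + 1) → Pl) := by
  intro i j k hij hjk
  induction j using Fin.cases with
  | zero => exact absurd hij (Fin.not_lt_zero _)
  | succ j =>
  induction k using Fin.cases with
  | zero => exact absurd hjk (Fin.not_lt_zero _)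
  | succ k =>
  induction i using Fin.cases with
  | zero => simpa using h₀ j k (Fin.succ_lt_succ_iff.1 hjk)
  | succ i => simpa using hf i j k (Fin.succ_lt_succ_iff.1 hij) (Fin.succ_lt_succ_iff.1 hjk)

/-- Seen from the lexicographically smallest point `p₀` the other points lie in a half-plane,
where "counterclockwise from" is a strict total order; sort them by it. -/
theorem exists_convexCyclic {P : Finset Pl} {n : ℕ} (hn : P.card = n + 1) (hgp : GenPos ↑P)
    (hconv : ConvexPos ↑P) :
    ∃ p : Fin (n + 1) → Pl, Function.Injective p ∧ Set.range p = ↑P ∧ ConvexCyclic p := by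
  obtain ⟨p₀, hp₀, hmin⟩ := P.exists_min_image toLex (Finset.card_pos.1 (by omega))
  set Q := P.erase p₀
  have hQ : ∀ q ∈ Q, toLex p₀ < toLex q := fun q hq =>
    (hmin q (Finset.mem_of_mem_erase hq)).lt_of_ne
      fun h => Finset.ne_of_mem_erase hq (toLex.injective h).symm
  let r : Q → Q → Prop := fun a b => 0 < det3 p₀ a b
  have : IsStrictTotalOrder Q r :=
    { irrefl a := by simp [r, det3_self_right]
      trans a b c := det3_pos_trans (hQ _ a.2) (hQ _ b.2) (hQ _ c.2)
      trichotomous a b hab hba := by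
        by_contra hne
        refine hgp.det3_ne_zero hp₀ (Finset.mem_of_mem_erase a.2) (Finset.mem_of_mem_erase b.2)
          (Finset.ne_of_mem_erase a.2).symm (Finset.ne_of_mem_erase b.2).symm
          (Subtype.val_injective.ne hne) ?_
        simp only [r, not_lt, det3_swap p₀ b a] at hab hba ⊢
        linarith }
  obtain ⟨e, he⟩ := exists_equiv_fin_of_isStrictTotalOrder r (k := n)
    (by simp [Q, Finset.card_erase_of_mem hp₀, hn])
  have hinj : Function.Injective fun i => (e i : Pl) := Subtype.val_injective.comp e.injective
  have hmem : ∀ i, (e i : Pl) ∈ P := fun i => Finset.mem_of_mem_erase (e i).2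
  refine ⟨Fin.cons p₀ (fun i => (e i : Pl)), Fin.cons_injective_iff.2 ⟨?_, hinj⟩, ?_,
    ConvexCyclic.cons (fun i j k hij hjk => ?_) he⟩
  · rintro ⟨i, hi⟩
    have hQi : (e i : Pl) ∈ Q := (e i).2
    rw [show (e i : Pl) = p₀ from hi] at hQi
    exact Finset.notMem_erase p₀ P hQi
  · have hrange : Set.range (fun i => (e i : Pl)) = ↑Q := Set.ext fun x =>
      ⟨by rintro ⟨i, rfl⟩; exact (e i).2, fun hx => ⟨e.symm ⟨x, hx⟩, by simp⟩⟩
    rw [Fin.range_cons, hrange, ← Finset.coe_insert, Finset.insert_erase hp₀]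
  · exact hconv.det3_pos hp₀ (hmem i) (hmem j) (hmem k)
      (hgp.det3_ne_zero (hmem i) (hmem j) (hmem k) (hinj.ne hij.ne) (hinj.ne (hij.trans hjk).ne)
        (hinj.ne hjk.ne)) (he i j hij) (he j k hjk)

abbrev Chord (n : ℕ) := {x : Fin n × Fin n // x.1 < x.2}

def Chord.ofNe {n : ℕ} (i j : Fin n) (h : i ≠ j) : Chord n :=
  ⟨(min i j, max i j), min_lt_max.2 h⟩

/-- Two chords are adjacent when their index intervals are separated or nested, which for
vertices in convex position is exactly when the chords are disjoint. -/
def chordDisjGraph (n : ℕ) : SimpleGraph (Chord n) where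
  Adj a b := a.1.2 < b.1.1 ∨ b.1.2 < a.1.1 ∨ (a.1.1 < b.1.1 ∧ b.1.2 < a.1.2) ∨
    (b.1.1 < a.1.1 ∧ a.1.2 < b.1.2)
  symm := ⟨fun _ _ => by tauto⟩
  loopless := ⟨fun a => by have := a.2; simp only [Fin.lt_def] at *; omega⟩

instance (n : ℕ) : DecidableRel (chordDisjGraph n).Adj := fun a b => by
  unfold chordDisjGraph; infer_instance

def chordSegment {n : ℕ} (p : Fin n → Pl) (a : Chord n) : Set Pl := segment ℝ (p a.1.1) (p a.1.2)

namespace ConvexCyclic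

variable {n : ℕ} {p : Fin n → Pl}

lemma not_disjoint_of_lt (hp : ConvexCyclic p) {i j k l : Fin n} (h₁ : i < k) (h₂ : k < j)
    (h₃ : j < l) : ¬ Disjoint (segment ℝ (p i) (p j)) (segment ℝ (p k) (p l)) :=
  not_disjoint_segment_of_det3_pos (hp i k j h₁ h₂) (hp i k l h₁ (h₂.trans h₃))
    (hp i j l (h₁.trans h₂) h₃) (hp k j l h₂ h₃)

lemma adj_of_disjoint (hp : ConvexCyclic p) {a b : Chord n}
    (h : Disjoint (chordSegment p a) (chordSegment p b)) : (chordDisjGraph n).Adj a b := by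
  obtain ⟨⟨i, j⟩, hij⟩ := a
  obtain ⟨⟨k, l⟩, hkl⟩ := b
  by_contra hadj
  simp only [chordDisjGraph] at hadj
  dsimp only at hij hkl hadj
  have : i = k ∨ i = l ∨ j = k ∨ j = l ∨ (i < k ∧ k < j ∧ j < l) ∨ (k < i ∧ i < l ∧ l < j) := by
    simp only [Fin.lt_def, Fin.ext_iff] at hij hkl hadj ⊢
    omega
  unfold chordSegment at h
  rcases this with rfl | rfl | rfl | rfl | ⟨h₁, h₂, h₃⟩ | ⟨h₁, h₂, h₃⟩
  · exact h.ne_of_mem (left_mem_segment ℝ _ _) (left_mem_segment ℝ _ _) rfl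
  · exact h.ne_of_mem (left_mem_segment ℝ _ _) (right_mem_segment ℝ _ _) rfl
  · exact h.ne_of_mem (right_mem_segment ℝ _ _) (left_mem_segment ℝ _ _) rfl
  · exact h.ne_of_mem (right_mem_segment ℝ _ _) (right_mem_segment ℝ _ _) rfl
  · exact hp.not_disjoint_of_lt h₁ h₂ h₃ h
  · exact hp.not_disjoint_of_lt h₁ h₂ h₃ h.symm

end ConvexCyclic

lemma exists_chord_equiv_segs {P : Set Pl} {n : ℕ} {p : Fin n → Pl} (hgp : GenPos P)
    (hinj : Function.Injective p) (hrange : Set.range p = P) :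
    ∃ e : Chord n ≃ Segs P, ∀ a, (e a : Set Pl) = chordSegment p a := by
  have hmem : ∀ i, p i ∈ P := fun i => hrange ▸ Set.mem_range_self i
  let f : Chord n → Segs P := fun a =>
    ⟨chordSegment p a, p a.1.1, hmem _, p a.1.2, hmem _, hinj.ne a.2.ne, rfl⟩
  refine ⟨Equiv.ofBijective f ⟨?_, ?_⟩, fun _ => rfl⟩
  · rintro ⟨⟨i, j⟩, hij⟩ ⟨⟨k, l⟩, hkl⟩ h
    have hs : segment ℝ (p i) (p j) = segment ℝ (p k) (p l) := congrArg Subtype.val h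
    have key : ∀ m, p m ∈ segment ℝ (p i) (p j) → m = i ∨ m = j := fun m hm =>
      (hgp.eq_or_eq_of_mem_segment (hmem i) (hmem j) (hmem m) (hinj.ne hij.ne) hm).imp
        (@hinj _ _) (@hinj _ _)
    have hk := key k (hs ▸ left_mem_segment ℝ _ _)
    have hl := key l (hs ▸ right_mem_segment ℝ _ _)
    dsimp only at hij hkl
    simp only [Subtype.mk.injEq, Prod.mk.injEq, Fin.ext_iff]
    simp only [Fin.lt_def, Fin.ext_iff] at hij hkl hk hl
    omega
  · rintro ⟨s, x, hx, y, hy, hxy, rfl⟩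
    obtain ⟨i, rfl⟩ := hrange ▸ hx
    obtain ⟨j, rfl⟩ := hrange ▸ hy
    refine ⟨Chord.ofNe i j (fun h => hxy (h ▸ rfl)), Subtype.ext ?_⟩
    rcases le_total i j with h | h
    · simp [f, chordSegment, Chord.ofNe, h]
    · simp [f, chordSegment, Chord.ofNe, h, segment_symm]

namespace Chord

open Finset SimpleGraph.Subgraph

-- Indices are taken mod 6, so `side 5` joins `5` and `0`.
def side (i : Fin 6) : Chord 6 := ofNe i (i + 1) (by revert i; decide)
def shortDiag (i : Fin 6) : Chord 6 := ofNe i (i + 2) (by revert i; decide)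
def longDiag (i : Fin 6) : Chord 6 := ofNe i (i + 3) (by revert i; decide)

lemma side_injective : Function.Injective side := by decide

lemma shortDiag_injective : Function.Injective shortDiag := by decide

lemma eq_of_adj_longDiag (i : Fin 6) (y : Chord 6) (h : (chordDisjGraph 6).Adj (longDiag i) y) :
    y = side (i + 1) ∨ y = side (i + 4) := by
  revert i y; decide

lemma eq_of_adj_shortDiag (i : Fin 6) (y : Chord 6) (h : (chordDisjGraph 6).Adj (shortDiag i) y) :
    y = side (i + 3) ∨ y = side (i + 4) ∨ y = shortDiag (i + 3) := by
  revert i y; decide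

lemma eq_of_adj_side_shortDiag (i j : Fin 6) (h : (chordDisjGraph 6).Adj (side j) (shortDiag i)) :
    i = j + 2 ∨ i = j + 3 := by
  revert i j; decide

variable {H : (chordDisjGraph 6).Subgraph}

lemma adj_longDiag (hH : ∀ v, (H.neighborSet v).ncard = 2) (i : Fin 6) :
    H.Adj (longDiag i) (side (i + 1)) ∧ H.Adj (longDiag i) (side (i + 4)) :=
  adj_and_adj_of_ncard_neighborSet_eq_two (hH _) (by revert i; decide)
    fun y hy => eq_of_adj_longDiag i y (H.adj_sub hy)

lemma adj_side_longDiag (hH : ∀ v, (H.neighborSet v).ncard = 2) (j : Fin 6) :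
    H.Adj (side j) (longDiag (j + 2)) := by
  have h := (adj_longDiag hH (j + 2)).2.symm
  rwa [show ∀ j : Fin 6, j + 2 + 4 = j by decide] at h

lemma eq_of_side_adj_shortDiag (hH : ∀ v, (H.neighborSet v).ncard = 2) {i i' j : Fin 6}
    (h : H.Adj (side j) (shortDiag i)) (h' : H.Adj (side j) (shortDiag i')) : i = i' := by
  have hne : ∀ i j : Fin 6, longDiag (j + 2) ≠ shortDiag i := by decide
  rcases eq_or_eq_of_ncard_neighborSet_eq_two (hH _) (adj_side_longDiag hH j) h (hne i j) h'
    with h'' | h''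
  · exact absurd h''.symm (hne i' j)
  · exact (shortDiag_injective h'').symm

lemma exists_adj_side (hH : ∀ v, (H.neighborSet v).ncard = 2) (i : Fin 6) :
    ∃ j, H.Adj (shortDiag i) (side j) := by
  obtain ⟨y, hy, hadj⟩ :=
    exists_adj_ne_of_ncard_neighborSet_eq_two (hH (shortDiag i)) (shortDiag (i + 3))
  rcases eq_of_adj_shortDiag i y (H.adj_sub hadj) with rfl | rfl | rfl
  exacts [⟨_, hadj⟩, ⟨_, hadj⟩, absurd rfl hy]

lemma adj_sides_of_not_adj (hH : ∀ v, (H.neighborSet v).ncard = 2) {i : Fin 6}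
    (h : ¬ H.Adj (shortDiag i) (shortDiag (i + 3))) :
    H.Adj (shortDiag i) (side (i + 3)) ∧ H.Adj (shortDiag i) (side (i + 4)) :=
  adj_and_adj_of_ncard_neighborSet_eq_two (hH _)
    ((by decide : ∀ i : Fin 6, side (i + 3) ≠ side (i + 4)) i) fun y hy => by
      rcases eq_of_adj_shortDiag i y (H.adj_sub hy) with hy' | hy' | rfl
      exacts [.inl hy', .inr hy', absurd hy h]

open scoped Classical in
lemma sum_card_adj_side_eq (H : (chordDisjGraph 6).Subgraph) :
    ∑ i, #{j | H.Adj (shortDiag i) (side j)} = ∑ j, #{i | H.Adj (side j) (shortDiag i)} := by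
  simp_rw [H.adj_comm (side _)]
  exact sum_card_bipartiteAbove_eq_sum_card_bipartiteBelow _

open scoped Classical in
lemma one_le_card_adj_side (hH : ∀ v, (H.neighborSet v).ncard = 2) (i : Fin 6) :
    1 ≤ #{j | H.Adj (shortDiag i) (side j)} :=
  let ⟨j, hj⟩ := exists_adj_side hH i
  card_pos.2 ⟨j, by simpa using hj⟩

open scoped Classical in
lemma card_adj_shortDiag_le_one (hH : ∀ v, (H.neighborSet v).ncard = 2) (j : Fin 6) :
    #{i | H.Adj (side j) (shortDiag i)} ≤ 1 :=
  card_le_one.2 fun _ ha _ hb =>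
    eq_of_side_adj_shortDiag hH (by simpa using ha) (by simpa using hb)

open scoped Classical in
lemma adj_shortDiag_add_three (hH : ∀ v, (H.neighborSet v).ncard = 2) (i : Fin 6) :
    H.Adj (shortDiag i) (shortDiag (i + 3)) := by
  by_contra h
  -- then the short diagonals meet at least 7 sides in total, the sides at most 6 short ones
  have h2 : 1 < #{j | H.Adj (shortDiag i) (side j)} := by
    have hsides := adj_sides_of_not_adj hH h
    have := card_le_card (s := {i + 3, i + 4}) (t := {j | H.Adj (shortDiag i) (side j)})
      (by simp [insert_subset_iff, hsides.1, hsides.2])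
    rwa [card_pair ((by decide : ∀ i : Fin 6, i + 3 ≠ i + 4) i)] at this
  have := (sum_le_sum fun j _ => card_adj_shortDiag_le_one hH j).trans_lt'
    ((sum_card_adj_side_eq H).symm.trans_gt
      (sum_lt_sum (fun i _ => one_le_card_adj_side hH i) ⟨i, mem_univ _, h2⟩))
  simp at this

open scoped Classical in
lemma exists_adj_shortDiag (hH : ∀ v, (H.neighborSet v).ncard = 2) (j : Fin 6) :
    ∃ i, H.Adj (side j) (shortDiag i) := by
  by_contra! h
  have h0 : #{i | H.Adj (side j) (shortDiag i)} < 1 := by simp [h]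
  have := (sum_le_sum fun i _ => one_le_card_adj_side hH i).trans_lt
    ((sum_card_adj_side_eq H).trans_lt
      (sum_lt_sum (fun j _ => card_adj_shortDiag_le_one hH j) ⟨j, mem_univ _, h0⟩))
  simp at this

lemma eq_of_shortDiag_adj_side (hH : ∀ v, (H.neighborSet v).ncard = 2) {i j j' : Fin 6}
    (h : H.Adj (shortDiag i) (side j)) (h' : H.Adj (shortDiag i) (side j')) : j = j' := by
  have hne : ∀ i j : Fin 6, shortDiag (i + 3) ≠ side j := by decide
  rcases eq_or_eq_of_ncard_neighborSet_eq_two (hH _) (adj_shortDiag_add_three hH i) h (hne i j) h'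
    with h'' | h''
  · exact absurd h''.symm (hne i j')
  · exact (side_injective h'').symm

lemma adj_of_adj_side_add_three (hH : ∀ v, (H.neighborSet v).ncard = 2) {i : Fin 6}
    (h : H.Adj (shortDiag i) (side (i + 3))) : H.Adj (shortDiag (i + 1)) (side (i + 4)) := by
  obtain ⟨i', hi'⟩ := exists_adj_shortDiag hH (i + 4)
  rcases eq_of_adj_side_shortDiag i' (i + 4) (H.adj_sub hi') with rfl | rfl
  · rw [show ∀ i : Fin 6, i + 4 + 2 = i by decide] at hi'
    exact absurd (eq_of_shortDiag_adj_side hH h hi'.symm)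
      ((by decide : ∀ i : Fin 6, i + 3 ≠ i + 4) i)
  · rw [show ∀ i : Fin 6, i + 4 + 3 = i + 1 by decide] at hi'
    exact hi'.symm

lemma adj_of_adj_side_add_four (hH : ∀ v, (H.neighborSet v).ncard = 2) {i : Fin 6}
    (h : H.Adj (shortDiag i) (side (i + 4))) : H.Adj (shortDiag (i + 5)) (side (i + 3)) := by
  obtain ⟨i', hi'⟩ := exists_adj_shortDiag hH (i + 3)
  rcases eq_of_adj_side_shortDiag i' (i + 3) (H.adj_sub hi') with rfl | rfl
  · rw [show ∀ i : Fin 6, i + 3 + 2 = i + 5 by decide] at hi'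
    exact hi'.symm
  · rw [show ∀ i : Fin 6, i + 3 + 3 = i by decide] at hi'
    exact absurd (eq_of_shortDiag_adj_side hH h hi'.symm)
      ((by decide : ∀ i : Fin 6, i + 4 ≠ i + 3) i)

lemma exists_fiveCycle (hH : ∀ v, (H.neighborSet v).ncard = 2) :
    ∃ v : Fin 5 → Chord 6, Function.Injective v ∧ ∀ k, H.Adj (v k) (v (k + 1)) := by
  obtain ⟨j, hj⟩ := exists_adj_side hH 0
  rcases eq_of_adj_shortDiag 0 _ (H.adj_sub hj) with h | h | h
  · obtain rfl := side_injective h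
    have h3 := adj_of_adj_side_add_three hH (adj_of_adj_side_add_three hH
      (adj_of_adj_side_add_three hH hj))
    refine ⟨![side 0, longDiag 2, side 3, shortDiag 0, shortDiag 3], by decide, fun k => ?_⟩
    fin_cases k
    exacts [adj_side_longDiag hH 0, (adj_longDiag hH 2).1, hj.symm,
      adj_shortDiag_add_three hH 0, h3]
  · obtain rfl := side_injective h
    have h3 := adj_of_adj_side_add_four hH (adj_of_adj_side_add_four hH
      (adj_of_adj_side_add_four hH hj))
    refine ⟨![side 1, longDiag 0, side 4, shortDiag 0, shortDiag 3], by decide, fun k => ?_⟩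
    fin_cases k
    exacts [adj_side_longDiag hH 1, (adj_longDiag hH 0).2, hj.symm,
      adj_shortDiag_add_three hH 0, h3]
  · exact absurd h ((by decide : ∀ j : Fin 6, side j ≠ shortDiag 3) j)

theorem not_isHamiltonian_chordDisjGraph_six : ¬ (chordDisjGraph 6).IsHamiltonian := by
  intro hG
  obtain ⟨a, p, hp⟩ := hG (by decide)
  obtain ⟨v, hv, hadj⟩ := exists_fiveCycle
    fun x => hp.isCycle.ncard_neighborSet_toSubgraph_eq_two (hp.mem_support x)
  exact absurd (Fintype.card_le_of_surjective v (hp.surjective_of_cycle v hv hadj)) (by decide)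

end Chord

/-- for 6 points in convex position, `D(P)` is not hamiltonian. -/
theorem stmt_10 (P : Finset Pl) (h6 : P.card = 6) (hgp : GenPos ↑P)
    (hconv : ConvexPos ↑P) [Fintype ↥(Segs (↑P : Set Pl))] [DecidableEq ↥(Segs (↑P : Set Pl))] :
    ¬ (DisjGraph ↑P).IsHamiltonian := by
  obtain ⟨p, hinj, hrange, hcyc⟩ := exists_convexCyclic (n := 5) h6 hgp hconv
  obtain ⟨e, he⟩ := exists_chord_equiv_segs hgp hinj hrange
  refine fun hHam => Chord.not_isHamiltonian_chordDisjGraph_six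
    (hHam.map ⟨e.symm, fun {s t} hst => hcyc.adj_of_disjoint ?_⟩ e.symm.bijective)
  rwa [← he, ← he, e.apply_symm_apply, e.apply_symm_apply]
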